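/- In the poset P³, any two conditions p, q with the same stem ⟨δ₀, P₁, …, Pₙ, δₙ⟩ whose constraint parts satisfy: dom(h_p) ∩ dom(h_q) ∈ E, and for every β in this intersection h_p(β) and h_q(β) are compatible in P(δₙ, β), and for every pair (α, β) the values H_p(α,β), H_q(α,β) are compatible in P(α,β), are compatible in P³. -/

import Mathlib

/-! The common extension keeps the shared stem and, on `dom(h_p) ∩ dom(h_q)`, takes pointwise
common extensions of the `h`- and `H`-parts; no Prikry point is added, so it is a direct
extension of both conditions. -/

open Cardinal Ordinal

/-- Partial functions on pairs of ordinals (conditions of Lévy collapses `Col(γ, <δ)`). -/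
abbrev Col2 := Ordinal.{0} × Ordinal.{0} → Option Ordinal.{0}

/-- Partial functions on ordinals (conditions of collapses `Col(γ, δ)`). -/
abbrev Col1 := Ordinal.{0} → Option Ordinal.{0}

/-- `p` is a condition of `Col(γ, <δ)`: a partial function on `γ × δ` with
`p (ξ, ζ) < ζ` and domain of size `< card γ`. -/
def memColLt (γ δ : Ordinal.{0}) (p : Col2) : Prop :=
  (∀ ξ ζ v, p (ξ, ζ) = some v → ξ < γ ∧ ζ < δ ∧ v < ζ) ∧
    #{x | p x ≠ none} < Cardinal.lift.{1,0} γ.card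

/-- `p` is a condition of `Col(γ, δ)`: a partial function from `γ` to `δ` with
domain of size `< card γ`. -/
def memCol (γ δ : Ordinal.{0}) (p : Col1) : Prop :=
  (∀ ξ v, p ξ = some v → ξ < γ ∧ v < δ) ∧
    #{x | p x ≠ none} < Cardinal.lift.{1,0} γ.card

/-- The extension (reverse inclusion) order on partial functions. -/
def col2Le (p q : Col2) : Prop := ∀ x v, q x = some v → p x = some v

def col1Le (p q : Col1) : Prop := ∀ x v, q x = some v → p x = some v

/-- The ordinal of the third cardinal successor `α⁺⁺⁺`. -/
noncomputable def succ3 (α : Ordinal.{0}) : Ordinal :=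
  (Order.succ (Order.succ (Order.succ α.card))).ord

/-- A condition of the product `P(α, β) = Col(α⁺⁺⁺, <β) × Col(β, β⁺)`. -/
abbrev PairCond := Col2 × Col1

def memP (α β : Ordinal.{0}) (c : PairCond) : Prop :=
  memColLt (succ3 α) β c.1 ∧ memCol β (Order.succ β.card).ord c.2

/-- The coordinatewise order on `P(α, β)`. -/
def pairLe (c d : PairCond) : Prop := col2Le c.1 d.1 ∧ col1Le c.2 d.2

/-- A condition `⟨δ₀, P₁, δ₁, …, Pₙ, δₙ, H, h⟩` of the Prikry-type forcing `P³`
(Definition 2.1), relative to a cardinal (ordinal) `κ` and a family `E` of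
measure-one subsets of `κ`. -/
structure P3Cond (κ : Ordinal.{0}) (E : Set (Set Ordinal.{0})) where
  n : ℕ
  δ : Fin (n + 1) → Ordinal.{0}
  P : Fin n → PairCond
  H : Ordinal.{0} × Ordinal.{0} → PairCond
  h : Ordinal.{0} → PairCond
  dom : Set Ordinal.{0}
  δ_mono : StrictMono δ
  δ_lt : δ (Fin.last n) < κ
  P_mem : ∀ k : Fin n, memP (δ k.castSucc) (δ k.succ) (P k)
  dom_mem : dom ∈ E
  dom_sub : ∀ β ∈ dom, δ (Fin.last n) < β ∧ β < κ
  h_mem : ∀ β ∈ dom, memP (δ (Fin.last n)) β (h β)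
  H_mem : ∀ α ∈ dom, ∀ β ∈ dom, α < β → memP α β (H (α, β))

/-- The ordering of `P³` (Definition 2.2): `p ≤ q` iff the stem of `p` end-extends that
of `q` with coordinatewise stronger collapse parts, new Prikry points come from `dom(h_q)`
with collapse parts below the prescribed values of `q`'s `h`- and `H`-parts,
`dom(h_p) ⊆ dom(h_q)`, and the `H`- (and, when no point is added, `h`-) parts of `p`
are pointwise stronger than those of `q`. -/
def P3Le {κ : Ordinal.{0}} {E : Set (Set Ordinal.{0})} (p q : P3Cond κ E) : Prop :=
  ∃ hn : q.n ≤ p.n,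
    (∀ k : Fin (q.n + 1), p.δ (Fin.castLE (Nat.succ_le_succ hn) k) = q.δ k) ∧
    (∀ k : Fin q.n, pairLe (p.P (Fin.castLE hn k)) (q.P k)) ∧
    (∀ k : Fin (p.n + 1), q.n < (k : ℕ) → p.δ k ∈ q.dom) ∧
    p.dom ⊆ q.dom ∧
    (∀ α ∈ p.dom, ∀ β ∈ p.dom, α < β → pairLe (p.H (α, β)) (q.H (α, β))) ∧
    (p.n = q.n → ∀ β ∈ p.dom, pairLe (p.h β) (q.h β)) ∧
    (∀ hlt : q.n < p.n,
      pairLe (p.P ⟨q.n, hlt⟩) (q.h (p.δ ⟨q.n + 1, by omega⟩)) ∧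
      (∀ k : Fin p.n, q.n + 1 ≤ (k : ℕ) →
        pairLe (p.P k) (q.H (p.δ k.castSucc, p.δ k.succ))) ∧
      (∀ β ∈ p.dom, pairLe (p.h β) (q.H (p.δ (Fin.last p.n), β))))

theorem pairLe_refl (c : PairCond) : pairLe c c :=
  ⟨fun _ _ h => h, fun _ _ h => h⟩

def P3Cond.withConstraints {κ : Ordinal.{0}} {E : Set (Set Ordinal.{0})} (p : P3Cond κ E)
    (H : Ordinal.{0} × Ordinal.{0} → PairCond) (h : Ordinal.{0} → PairCond)
    (dom : Set Ordinal.{0}) (dom_mem : dom ∈ E) (dom_sub : dom ⊆ p.dom)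
    (h_mem : ∀ β ∈ dom, memP (p.δ (Fin.last p.n)) β (h β))
    (H_mem : ∀ α ∈ dom, ∀ β ∈ dom, α < β → memP α β (H (α, β))) : P3Cond κ E where
  n := p.n
  δ := p.δ
  P := p.P
  H := H
  h := h
  dom := dom
  δ_mono := p.δ_mono
  δ_lt := p.δ_lt
  P_mem := p.P_mem
  dom_mem := dom_mem
  dom_sub β hβ := p.dom_sub β (dom_sub hβ)
  h_mem := h_mem
  H_mem := H_mem

theorem P3Le_of_n_eq {κ : Ordinal.{0}} {E : Set (Set Ordinal.{0})} (r q : P3Cond κ E)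
    (hn : r.n = q.n)
    (hδ : ∀ k : Fin (r.n + 1), r.δ k = q.δ (Fin.cast (congrArg (· + 1) hn) k))
    (hP : ∀ k : Fin r.n, pairLe (r.P k) (q.P (Fin.cast hn k)))
    (hdom : r.dom ⊆ q.dom)
    (hH : ∀ α ∈ r.dom, ∀ β ∈ r.dom, α < β → pairLe (r.H (α, β)) (q.H (α, β)))
    (hh : ∀ β ∈ r.dom, pairLe (r.h β) (q.h β)) :
    P3Le r q := by
  refine ⟨hn.ge, fun k => hδ _, fun k => hP _, fun k hk => ?_, hdom, hH, fun _ => hh,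
    fun hlt => absurd hn hlt.ne'⟩
  have := k.isLt
  omega

/-- Two conditions of `P³` with the same stem whose constraint parts are pointwise
compatible (and whose `h`-domains have measure-one intersection) are compatible in `P³`. -/
theorem stmt14 (κ : Ordinal.{0}) (E : Set (Set Ordinal.{0}))
    (p q : P3Cond κ E)
    (hn : p.n = q.n)
    (hδ : ∀ k : Fin (p.n + 1), p.δ k = q.δ (Fin.cast (by omega) k))
    (hP : ∀ k : Fin p.n, p.P k = q.P (Fin.cast (by omega) k))
    (hdom : p.dom ∩ q.dom ∈ E)
    (hh : ∀ β ∈ p.dom ∩ q.dom, ∃ c : PairCond,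
      memP (p.δ (Fin.last p.n)) β c ∧ pairLe c (p.h β) ∧ pairLe c (q.h β))
    (hH : ∀ α β : Ordinal.{0}, α < β → ∃ c : PairCond,
      memP α β c ∧ pairLe c (p.H (α, β)) ∧ pairLe c (q.H (α, β))) :
    ∃ r : P3Cond κ E, P3Le r p ∧ P3Le r q := by
  classical
  choose ch hch using hh
  choose cH hcH using hH
  let r := p.withConstraints
    (fun x => if hx : x.1 < x.2 then cH x.1 x.2 hx else p.H x)
    (fun β => if hβ : β ∈ p.dom ∩ q.dom then ch β hβ else p.h β)
    (p.dom ∩ q.dom) hdom Set.inter_subset_left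
    (fun β hβ => by simpa only [dif_pos hβ] using (hch β hβ).1)
    (fun α _ β _ hαβ => by simpa only [dif_pos hαβ] using (hcH α β hαβ).1)
  have hr_H : ∀ α β (hαβ : α < β), r.H (α, β) = cH α β hαβ := fun _ _ hαβ => dif_pos hαβ
  have hr_h : ∀ β (hβ : β ∈ p.dom ∩ q.dom), r.h β = ch β hβ := fun _ hβ => dif_pos hβ
  refine ⟨r, P3Le_of_n_eq r p rfl (fun _ => rfl) (fun _ => pairLe_refl _)
      Set.inter_subset_left ?_ ?_, P3Le_of_n_eq r q hn hδ (fun k => hP k ▸ pairLe_refl _)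
      Set.inter_subset_right ?_ ?_⟩
  · exact fun α _ β _ hαβ => hr_H α β hαβ ▸ (hcH α β hαβ).2.1
  · exact fun β hβ => hr_h β hβ ▸ (hch β hβ).2.1
  · exact fun α _ β _ hαβ => hr_H α β hαβ ▸ (hcH α β hαβ).2.2
  · exact fun β hβ => hr_h β hβ ▸ (hch β hβ).2.2
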